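/- arXiv:1710.09873 — 2 statements merged into one kernel-verified Lean document; each statement's English description precedes it below -/
import Mathlib

section
/- Let m ≥ 2 and fix an integer k ≥ 2. Then q_{k−1} · λ(A_k^{(1)}) + (q_k − q_{k−1}) · λ(A_k^{(2)}) = 1, where λ denotes the length of an interval; equivalently, the total Lebesgue measure of the sets R_k(u) reduced modulo 1, summed over 0 ≤ u < q_k, equals 1. -/
/-!
Put `β = (√d - m) / 2`. Then `φ = m + 1 + β`, `φ β = m + β` and `φ (1 - β) = 1`. The first two
identities give `q_{2n+2} + q_{2n+1} β = φ^{n+1}` by induction on `n`; the third computes the lengths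
of `A_k^{(1)}, A_k^{(2)}` as `(1 + β) / φ^{k₀}, 1 / φ^{k₀}` for even `k` and `1 / φ^{k₀}, β / φ^{k₀}`
for odd `k`. In both cases the weighted sum of the lengths is `(q_{2k₀} + q_{2k₀-1} β) / φ^{k₀} = 1`.
-/

noncomputable section

/-- Denominators of the convergents of `α = [0; 1, m, 1, m, …]`:
`q_0 = q_1 = 1`, `q_n = m·q_{n-1} + q_{n-2}` for even `n ≥ 2`, and
`q_n = q_{n-1} + q_{n-2}` for odd `n ≥ 3`. -/
def qseq (m : ℕ) : ℕ → ℕ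
  | 0 => 1
  | 1 => 1
  | n + 2 => (if n % 2 = 0 then m else 1) * qseq m (n + 1) + qseq m n

/-- `p_k(u) = (-1)^k u φ` where `φ = (m + 2 + √(m² + 4m))/2`. -/
def pk (m : ℕ) (k : ℕ) (u : ℤ) : ℝ :=
  (-1 : ℝ) ^ k * u * ((m + 2 + Real.sqrt (m ^ 2 + 4 * m)) / 2)

/-- The interval `A_k^{(1)}` (here `k₀ = ⌊k/2⌋`). -/
def A1 (m k : ℕ) : Set ℝ :=
  let d : ℝ := m ^ 2 + 4 * m
  let φ : ℝ := (m + 2 + Real.sqrt d) / 2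
  let k₀ : ℕ := k / 2
  if k % 2 = 0 then
    Set.Ico ((m - Real.sqrt d) / (2 * φ ^ k₀)) (1 / φ ^ k₀)
  else
    Set.Ico (-(1 / φ ^ (k₀ + 1))) ((-m + Real.sqrt d) / (2 * φ ^ k₀))

/-- The interval `A_k^{(2)}` (here `k₀ = ⌊k/2⌋`). -/
def A2 (m k : ℕ) : Set ℝ :=
  let d : ℝ := m ^ 2 + 4 * m
  let φ : ℝ := (m + 2 + Real.sqrt d) / 2
  let k₀ : ℕ := k / 2
  if k % 2 = 0 then
    Set.Ico ((m - Real.sqrt d) / (2 * φ ^ k₀)) (1 / φ ^ (k₀ + 1))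
  else
    Set.Ico (-(1 / φ ^ (k₀ + 1))) ((-m - 1 + Real.sqrt d) / φ ^ k₀)

/-- The set `R_k(u) = p_k(u) + A_k^{(1)}` for `0 ≤ u < q_{k-1}` and
`R_k(u) = p_k(u) + A_k^{(2)}` for `q_{k-1} ≤ u < q_k`. -/
def Rk (m k : ℕ) (u : ℕ) : Set ℝ :=
  (fun x => pk m k u + x) '' (if u < qseq m (k - 1) then A1 m k else A2 m k)

def phi (m : ℕ) : ℝ := (m + 2 + Real.sqrt (m ^ 2 + 4 * m)) / 2

def beta (m : ℕ) : ℝ := (Real.sqrt (m ^ 2 + 4 * m) - m) / 2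

section Constants

variable (m : ℕ)

lemma beta_nonneg : 0 ≤ beta m := by
  have h : Real.sqrt ((m : ℝ) ^ 2) ≤ Real.sqrt (m ^ 2 + 4 * m) :=
    Real.sqrt_le_sqrt (le_add_of_nonneg_right (by positivity))
  rw [Real.sqrt_sq (Nat.cast_nonneg m)] at h
  rw [beta]
  linarith

lemma phi_eq_add_beta : phi m = m + 1 + beta m := by
  rw [phi, beta]
  ring

lemma phi_pos : 0 < phi m := by
  rw [phi_eq_add_beta]
  linarith [beta_nonneg m]

lemma sq_sqrt_disc : Real.sqrt ((m : ℝ) ^ 2 + 4 * m) ^ 2 = m ^ 2 + 4 * m :=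
  Real.sq_sqrt (by positivity)

lemma phi_mul_beta : phi m * beta m = m + beta m := by
  rw [phi, beta]
  linear_combination sq_sqrt_disc m / 4

lemma phi_mul_one_sub_beta : phi m * (1 - beta m) = 1 := by
  rw [phi, beta]
  linear_combination -sq_sqrt_disc m / 4

lemma sqrt_disc_eq : Real.sqrt ((m : ℝ) ^ 2 + 4 * m) = m + 2 * beta m := by
  rw [beta]
  ring

lemma one_div_phi_pow_succ (n : ℕ) : 1 / phi m ^ (n + 1) = (1 - beta m) / phi m ^ n := by
  rw [← inv_eq_of_mul_eq_one_right (phi_mul_one_sub_beta m)]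
  ring

end Constants

lemma qseq_two_mul_add_three (m n : ℕ) :
    qseq m (2 * n + 3) = qseq m (2 * n + 2) + qseq m (2 * n + 1) := by
  rw [qseq, if_neg (by omega), one_mul]

lemma qseq_two_mul_add_four (m n : ℕ) :
    qseq m (2 * n + 4) = m * qseq m (2 * n + 3) + qseq m (2 * n + 2) := by
  rw [qseq, if_pos (by omega)]

lemma qseq_add_beta_mul (m n : ℕ) :
    qseq m (2 * n + 2) + qseq m (2 * n + 1) * beta m = phi m ^ (n + 1) := by
  induction n with
  | zero =>
    simp only [qseq, Nat.zero_mod, if_true]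
    push_cast
    rw [phi_eq_add_beta]
    ring
  | succ n ih =>
    rw [show 2 * (n + 1) + 2 = 2 * n + 4 by ring, show 2 * (n + 1) + 1 = 2 * n + 3 by ring,
      qseq_two_mul_add_four, qseq_two_mul_add_three, pow_succ, ← ih]
    push_cast
    linear_combination -(qseq m (2 * n + 2) : ℝ) * phi_eq_add_beta m -
      (qseq m (2 * n + 1) : ℝ) * phi_mul_beta m

lemma toReal_volume_Ico {a b l : ℝ} (h : b - a = l) (hl : 0 ≤ l) :
    (MeasureTheory.volume (Set.Ico a b)).toReal = l := by
  rw [Real.volume_Ico, h, ENNReal.toReal_ofReal hl]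

section Lengths

variable (m j : ℕ)

lemma toReal_volume_A1_even :
    (MeasureTheory.volume (A1 m (2 * j + 2))).toReal = (1 + beta m) / phi m ^ (j + 1) := by
  simp only [A1, if_pos (show (2 * j + 2) % 2 = 0 by omega), show (2 * j + 2) / 2 = j + 1 by omega]
  rw [← phi]
  refine toReal_volume_Ico ?_ (div_nonneg (by linarith [beta_nonneg m]) (pow_pos (phi_pos m) _).le)
  rw [sqrt_disc_eq]
  ring

lemma toReal_volume_A2_even :
    (MeasureTheory.volume (A2 m (2 * j + 2))).toReal = 1 / phi m ^ (j + 1) := by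
  simp only [A2, if_pos (show (2 * j + 2) % 2 = 0 by omega), show (2 * j + 2) / 2 = j + 1 by omega]
  rw [← phi]
  refine toReal_volume_Ico ?_ (div_nonneg zero_le_one (pow_pos (phi_pos m) _).le)
  rw [sqrt_disc_eq, one_div_phi_pow_succ]
  ring

lemma toReal_volume_A1_odd :
    (MeasureTheory.volume (A1 m (2 * j + 3))).toReal = 1 / phi m ^ (j + 1) := by
  simp only [A1, if_neg (show (2 * j + 3) % 2 ≠ 0 by omega), show (2 * j + 3) / 2 = j + 1 by omega]
  rw [← phi]
  refine toReal_volume_Ico ?_ (div_nonneg zero_le_one (pow_pos (phi_pos m) _).le)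
  rw [sqrt_disc_eq, one_div_phi_pow_succ]
  ring

lemma toReal_volume_A2_odd :
    (MeasureTheory.volume (A2 m (2 * j + 3))).toReal = beta m / phi m ^ (j + 1) := by
  simp only [A2, if_neg (show (2 * j + 3) % 2 ≠ 0 by omega), show (2 * j + 3) / 2 = j + 1 by omega]
  rw [← phi]
  refine toReal_volume_Ico ?_ (div_nonneg (beta_nonneg m) (pow_pos (phi_pos m) _).le)
  rw [sqrt_disc_eq, one_div_phi_pow_succ]
  ring

end Lengths

theorem Rk_total_measure_general (m : ℕ) (k : ℕ) (hk : 2 ≤ k) :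
    (qseq m (k - 1) : ℝ) * (MeasureTheory.volume (A1 m k)).toReal +
        ((qseq m k : ℝ) - (qseq m (k - 1) : ℝ)) *
          (MeasureTheory.volume (A2 m k)).toReal = 1 := by
  have hP : ∀ j, phi m ^ (j + 1) ≠ 0 := fun j => pow_ne_zero _ (phi_pos m).ne'
  obtain ⟨j, rfl | rfl⟩ : ∃ j, k = 2 * j + 2 ∨ k = 2 * j + 3 := ⟨k / 2 - 1, by omega⟩
  · rw [toReal_volume_A1_even, toReal_volume_A2_even, show 2 * j + 2 - 1 = 2 * j + 1 by omega]
    field_simp [hP j]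
    linear_combination qseq_add_beta_mul m j
  · rw [toReal_volume_A1_odd, toReal_volume_A2_odd, show 2 * j + 3 - 1 = 2 * j + 2 by omega,
      qseq_two_mul_add_three]
    push_cast
    field_simp [hP j]
    linear_combination qseq_add_beta_mul m j

/-- The total measure of the sets `R_k(u) mod 1`, `0 ≤ u < q_k`, equals `1`:
`q_{k-1} λ(A_k^{(1)}) + (q_k - q_{k-1}) λ(A_k^{(2)}) = 1`. -/
theorem Rk_total_measure (m : ℕ) (hm : 2 ≤ m) (k : ℕ) (hk : 2 ≤ k) :
    (qseq m (k - 1) : ℝ) * (MeasureTheory.volume (A1 m k)).toReal +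
        ((qseq m k : ℝ) - (qseq m (k - 1) : ℝ)) *
          (MeasureTheory.volume (A2 m k)).toReal = 1 :=
  Rk_total_measure_general m k hk

end
end

section
/- Let m ≥ 2 and let (q_n) be as defined. Then for all real numbers γ and β and every integer k ≥ 0, with c_j = γ + β q_j, one has min(‖γ‖, ‖mγ‖) ≤ m (‖c_{k+1}‖ + ‖c_{k+2}‖ + ‖c_{k+3}‖). -/
noncomputable section

/-- `‖x‖`: the distance from `x` to the nearest integer. -/
def intDist (x : ℝ) : ℝ := |x - round x|

lemma intDist_nonneg (x : ℝ) : 0 ≤ intDist x := abs_nonneg _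

lemma intDist_le (x : ℝ) (z : ℤ) : intDist x ≤ |x - z| := round_le x z

lemma intDist_add_le (x y : ℝ) : intDist (x + y) ≤ intDist x + intDist y := by
  calc intDist (x + y) ≤ |x + y - (round x + round y : ℤ)| := intDist_le _ _
    _ ≤ intDist x + intDist y := by
        push_cast
        have : x + y - ((round x : ℝ) + round y) = (x - round x) + (y - round y) := by ring
        rw [this]
        exact abs_add_le _ _

lemma intDist_neg (x : ℝ) : intDist (-x) ≤ intDist x := by
  calc intDist (-x) ≤ |(-x) - (-round x : ℤ)| := intDist_le _ _
    _ = intDist x := by push_cast; rw [show -x - -(round x : ℝ) = -(x - round x) by ring, abs_neg]; rfl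

lemma intDist_nsmul (n : ℕ) (x : ℝ) : intDist (n * x) ≤ n * intDist x := by
  induction n with
  | zero => simp [intDist]
  | succ n ih =>
      have : ((n : ℝ) + 1) * x = n * x + x := by ring
      push_cast
      rw [this]
      calc intDist (n * x + x) ≤ intDist (n * x) + intDist x := intDist_add_le _ _
        _ ≤ n * intDist x + intDist x := by linarith
        _ = (n + 1) * intDist x := by ring

/-- With `c_j = γ + β q_j`, one has
`min(‖γ‖, ‖mγ‖) ≤ m(‖c_{k+1}‖ + ‖c_{k+2}‖ + ‖c_{k+3}‖)`. -/
theorem min_dist_bound (m : ℕ) (hm : 2 ≤ m) (γ β : ℝ) (k : ℕ) :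
    min (intDist γ) (intDist (m * γ)) ≤
      m * (intDist (γ + β * qseq m (k + 1)) +
        intDist (γ + β * qseq m (k + 2)) +
        intDist (γ + β * qseq m (k + 3))) := by
  set a : ℕ := if (k + 1) % 2 = 0 then m else 1 with ha
  have hq : qseq m (k + 3) = a * qseq m (k + 2) + qseq m (k + 1) := rfl
  set c1 := γ + β * qseq m (k + 1)
  set c2 := γ + β * qseq m (k + 2)
  set c3 := γ + β * qseq m (k + 3)
  have key : (a : ℝ) * γ = a * c2 + c1 + (-c3) := by
    simp only [c1, c2, c3, hq]
    push_cast
    ring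
  have h1 : intDist (a * γ) ≤ a * intDist c2 + intDist c1 + intDist c3 := by
    calc intDist (a * γ) = intDist (a * c2 + c1 + (-c3)) := by rw [key]
      _ ≤ intDist (a * c2 + c1) + intDist (-c3) := intDist_add_le _ _
      _ ≤ intDist (a * c2) + intDist c1 + intDist c3 := by
          have := intDist_add_le (a * c2) c1
          have := intDist_neg c3
          linarith
      _ ≤ a * intDist c2 + intDist c1 + intDist c3 := by
          have := intDist_nsmul a c2
          linarith
  have ha_le : (a : ℝ) ≤ m := by
    have : a ≤ m := by rw [ha]; split <;> omega
    exact_mod_cast this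
  have hm1 : (1 : ℝ) ≤ m := by exact_mod_cast le_trans one_le_two hm
  have h2 : intDist (a * γ) ≤ m * (intDist c1 + intDist c2 + intDist c3) := by
    nlinarith [intDist_nonneg c1, intDist_nonneg c2, intDist_nonneg c3]
  have hmin : min (intDist γ) (intDist (m * γ)) ≤ intDist (a * γ) := by
    rw [ha]; split
    · exact min_le_right _ _
    · simp only [Nat.cast_one, one_mul]; exact min_le_left (intDist γ) (intDist (m * γ))
  linarith

end
end
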